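/- For every m ≥ 1, the polynomial f_{d-1}(x,y,z) divides f_{md-1}(x,y,z) in ℤ[x,y,z]. -/
import Mathlib


/-- The polynomials f_k(x,y,z) ∈ ℤ[x,y,z] (x = X 0, y = X 1, z = X 2) of
Definition 3.19, depending on d: f_0 = 1, f_1 = y, f_d = z,
f_{md+l} = y·f_{md+l-1} - x·f_{md+l-2} for m ≥ 0 and 1 ≤ l ≤ d-1, and
f_{(m+1)d} = z·f_{md} - x·f_{(m+1)d-2} - Σ_{i=2}^{d-1} x^i·f_{md-1} - x^d·f_{(m-1)d}
for m ≥ 1. -/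
noncomputable def f3 (d : ℕ) : ℕ → MvPolynomial (Fin 3) ℤ
  | 0 => 1
  | 1 => MvPolynomial.X 1
  | k + 2 =>
    if _h : (k + 2) % d = 0 then
      if k + 2 = d then MvPolynomial.X 2
      else
        MvPolynomial.X 2 * f3 d (k + 2 - d) - MvPolynomial.X 0 * f3 d k
          - (∑ i ∈ Finset.Icc 2 (d - 1), MvPolynomial.X 0 ^ i * f3 d (k + 2 - d - 1))
          - MvPolynomial.X 0 ^ d * f3 d (k + 2 - 2 * d)
    else MvPolynomial.X 1 * f3 d (k + 1) - MvPolynomial.X 0 * f3 d k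
  termination_by k => k
  decreasing_by
    all_goals
      first
        | omega
        | (have hd : d ≠ 0 := by rintro rfl; omega
           omega)

lemma f3_zero (d : ℕ) : f3 d 0 = 1 := by simp [f3]
lemma f3_one (d : ℕ) : f3 d 1 = MvPolynomial.X 1 := by simp [f3]

lemma f3_step (d : ℕ) (n : ℕ) (h2 : 2 ≤ n) (h : n % d ≠ 0) :
    f3 d n = MvPolynomial.X 1 * f3 d (n - 1) - MvPolynomial.X 0 * f3 d (n - 2) := by
  obtain ⟨k, rfl⟩ : ∃ k, n = k + 2 := ⟨n - 2, by omega⟩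
  rw [f3, dif_neg h]; rfl

lemma mod_ne (d m l : ℕ) (hd : 2 ≤ d) (h1 : 1 ≤ l) (h2 : l ≤ d - 1) :
    (m * d + l) % d ≠ 0 := by
  rw [Nat.add_comm, Nat.add_mul_mod_self_right, Nat.mod_eq_of_lt (by omega)]
  omega

lemma f3_split (d : ℕ) (hd : 2 ≤ d) (m : ℕ) (hm : 1 ≤ m) :
    ∀ l, 1 ≤ l → l ≤ d - 1 →
      f3 d (m * d + l) = f3 d l * f3 d (m * d)
        - MvPolynomial.X 0 * (f3 d (l - 1) * f3 d (m * d - 1)) := by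
  intro l
  induction l using Nat.strong_induction_on with
  | _ l ih =>
    intro h1 h2
    match l, h1 with
    | 1, _ =>
      rw [f3_step d (m * d + 1) (by nlinarith) (mod_ne d m 1 hd le_rfl h2), f3_one, f3_zero]
      have e1 : m * d + 1 - 1 = m * d := by omega
      have e2 : m * d + 1 - 2 = m * d - 1 := by omega
      rw [e1, e2]; ring
    | 2, _ =>
      have hmd : 2 ≤ m * d := by nlinarith
      rw [f3_step d (m * d + 2) (by omega) (mod_ne d m 2 hd (by omega) h2)]
      have e1 : m * d + 2 - 1 = m * d + 1 := by omega
      have e2 : m * d + 2 - 2 = m * d := by omega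
      rw [e1, e2, ih 1 (by omega) le_rfl (by omega),
        f3_step d 2 le_rfl (by rw [Nat.mod_eq_of_lt (by omega)]; omega)]
      rw [f3_one, f3_zero]
      ring
    | (j + 3), _ =>
      set l := j + 3 with hl
      have hmd : 2 ≤ m * d := by nlinarith
      rw [f3_step d (m * d + l) (by omega) (mod_ne d m l hd (by omega) h2)]
      have e1 : m * d + l - 1 = m * d + (l - 1) := by omega
      have e2 : m * d + l - 2 = m * d + (l - 2) := by omega
      rw [e1, e2, ih (l - 1) (by omega) (by omega) (by omega),
        ih (l - 2) (by omega) (by omega) (by omega),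
        f3_step d l (by omega) (by rw [Nat.mod_eq_of_lt (by omega)]; omega),
        f3_step d (l - 1) (by omega) (by rw [Nat.mod_eq_of_lt (by omega)]; omega)]
      have e3 : l - 1 - 1 = l - 2 := by omega
      have e4 : l - 1 - 2 = l - 3 := by omega
      have e5 : l - 2 - 1 = l - 3 := by omega
      rw [e3, e4, e5]
      ring

/-- f_{d-1}(x,y,z) divides f_{md-1}(x,y,z) for all m ≥ 1. -/
theorem f3_d_sub_one_dvd (d : ℕ) (hd : 2 ≤ d) (m : ℕ) (hm : 1 ≤ m) :
    f3 d (d - 1) ∣ f3 d (m * d - 1) := by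
  induction m with
  | zero => omega
  | succ m ih =>
    rcases Nat.eq_or_lt_of_le hm with h | h
    · rw [← h]; simp
    · have hm1 : 1 ≤ m := by omega
      have e : (m + 1) * d - 1 = m * d + (d - 1) := by
        have : 1 ≤ m * d := Nat.one_le_iff_ne_zero.mpr (by positivity)
        cases Nat.exists_eq_add_of_le hd with | intro c hc => subst hc; ring_nf; omega
      rw [e, f3_split d hd m hm1 (d - 1) (by omega) le_rfl]
      exact dvd_sub (Dvd.dvd.mul_right dvd_rfl _)
        (Dvd.dvd.mul_left (Dvd.dvd.mul_left (ih hm1) _) _)
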